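/- Let $P$ and $Q$ be probability distributions on a finite set $\mathcal{X}$ with $Q(x)>0$ whenever $P(x)>0$. For $\varepsilon \in (0,1)$ and $\alpha \in (1,2]$, the smooth max relative entropy satisfies $D_{\max}^{\varepsilon}(P\|Q) \leq D_{\alpha}(P\|Q) + \frac{1}{\alpha-1}\log\frac{1}{1-\sqrt{1-\varepsilon^2}}$, where $D_{\alpha}(P\|Q) = \frac{1}{\alpha-1}\log \sum_x P(x)^{\alpha}Q(x)^{1-\alpha}$. -/

import Mathlib

/-- Classical max relative entropy `D_max(P‖Q) = log₂ max_{x : P x > 0} P x / Q x`. -/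
noncomputable def DmaxC {X : Type*} [Fintype X] (P Q : X → ℝ) : ℝ :=
  Real.logb 2 (sSup {r : ℝ | ∃ x, 0 < P x ∧ r = P x / Q x})

/-- Generalized fidelity of subnormalized distributions. -/
noncomputable def gFidC {X : Type*} [Fintype X] (P P' : X → ℝ) : ℝ :=
  (∑ x, Real.sqrt (P x * P' x)) +
    Real.sqrt ((1 - ∑ x, P x) * (1 - ∑ x, P' x))

/-- Purified distance between subnormalized distributions. -/
noncomputable def pDistC {X : Type*} [Fintype X] (P P' : X → ℝ) : ℝ :=
  Real.sqrt (1 - (gFidC P P') ^ 2)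

/-- Smooth max relative entropy of classical distributions. -/
noncomputable def DmaxSmoothC {X : Type*} [Fintype X] (ε : ℝ) (P Q : X → ℝ) : ℝ :=
  sInf {r : ℝ | ∃ P' : X → ℝ,
    (∀ x, 0 ≤ P' x) ∧ (∑ x, P' x) ≤ 1 ∧ pDistC P P' ≤ ε ∧ r = DmaxC P' Q}

/-!
Keep `P` only where `P ≤ t Q`. The kept part `P'` agrees with `P` on its support, so its fidelity
with `P` is its mass, and `D_max(P'‖Q) ≤ log t`. On the discarded set `t Q < P`, hence
`P ≤ t^{1-α} P^α Q^{1-α}` (as `1 - α ≤ 0`), so the lost mass is at most `t^{1-α} ∑ P^α Q^{1-α}`;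
the choice `t^{α-1} = ∑ P^α Q^{1-α} / (1 - √(1-ε²))` keeps `P'` in the `ε`-ball and turns `log t`
into the right-hand side.

Since `D_max^ε` is a real `sInf`, the set it ranges over must also be bounded below: by
Cauchy–Schwarz, `F(P,P')² ≤ 2^{D_max(P'‖Q)}`, which bounds it below by `log (1 - ε²)`.
-/

open Finset Real

lemma le_rpow_mul_rpow_of_mul_le {p q t α : ℝ} (hα : 1 ≤ α) (ht : 0 < t) (hq : 0 < q)
    (h : t * q ≤ p) : p ≤ t ^ (1 - α) * (p ^ α * q ^ (1 - α)) := by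
  have htq : 0 < t * q := mul_pos ht hq
  have hp : 0 < p := htq.trans_le h
  calc p = p ^ α * p ^ (1 - α) := by rw [← rpow_add hp, add_sub_cancel, rpow_one]
    _ ≤ p ^ α * (t * q) ^ (1 - α) :=
      mul_le_mul_of_nonneg_left (rpow_le_rpow_of_nonpos htq h (by linarith)) (by positivity)
    _ = t ^ (1 - α) * (p ^ α * q ^ (1 - α)) := by rw [mul_rpow ht.le hq.le]; ring

noncomputable def ratioCutoff {X : Type*} (P Q : X → ℝ) (t : ℝ) (x : X) : ℝ :=
  if P x ≤ t * Q x then P x else 0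

section

variable {X : Type*} {P Q P' : X → ℝ} {t : ℝ}

lemma ratioCutoff_nonneg (hP0 : ∀ x, 0 ≤ P x) (x : X) : 0 ≤ ratioCutoff P Q t x := by
  unfold ratioCutoff
  split_ifs
  exacts [hP0 x, le_rfl]

lemma ratioCutoff_le (hP0 : ∀ x, 0 ≤ P x) (x : X) : ratioCutoff P Q t x ≤ P x := by
  unfold ratioCutoff
  split_ifs
  exacts [le_rfl, hP0 x]

variable [Fintype X]

lemma exists_pos_of_sum_pos (h : 0 < ∑ x, P x) : ∃ x, 0 < P x := by
  have h0 : ∑ _x : X, (0 : ℝ) < ∑ x, P x := by simpa using h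
  obtain ⟨x, -, hx⟩ := exists_lt_of_sum_lt h0
  exact ⟨x, hx⟩

lemma le_rpow_DmaxC_mul {x : X} (hP : 0 < P x) (hQ : 0 < Q x) :
    P x ≤ 2 ^ DmaxC P Q * Q x := by
  have hbdd : BddAbove {r : ℝ | ∃ x, 0 < P x ∧ r = P x / Q x} :=
    ((Set.finite_range fun x => P x / Q x).subset <| by
      rintro r ⟨x, -, rfl⟩
      exact ⟨x, rfl⟩).bddAbove
  have hle : P x / Q x ≤ sSup {r : ℝ | ∃ x, 0 < P x ∧ r = P x / Q x} :=
    le_csSup hbdd ⟨x, hP, rfl⟩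
  rw [DmaxC, rpow_logb two_pos one_lt_two.ne' ((div_pos hP hQ).trans_le hle)]
  exact (div_le_iff₀ hQ).mp hle

lemma DmaxC_le_logb {t : ℝ} (hex : ∃ x, 0 < P x)
    (hle : ∀ x, 0 < P x → 0 < Q x ∧ P x ≤ t * Q x) : DmaxC P Q ≤ logb 2 t := by
  obtain ⟨x₀, hx₀⟩ := hex
  have hub : ∀ r ∈ {r : ℝ | ∃ x, 0 < P x ∧ r = P x / Q x}, r ≤ t := by
    rintro r ⟨x, hx, rfl⟩
    exact (div_le_iff₀ (hle x hx).1).mpr (hle x hx).2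
  have hpos : 0 < sSup {r : ℝ | ∃ x, 0 < P x ∧ r = P x / Q x} :=
    (div_pos hx₀ (hle x₀ hx₀).1).trans_le (le_csSup ⟨t, hub⟩ ⟨x₀, hx₀, rfl⟩)
  exact logb_le_logb_of_le one_lt_two hpos (csSup_le ⟨_, x₀, hx₀, rfl⟩ hub)

lemma gFidC_eq_sum_sqrt (hP1 : ∑ x, P x = 1) (P' : X → ℝ) :
    gFidC P P' = ∑ x, √(P x * P' x) := by
  simp [gFidC, hP1]

lemma pDistC_le_iff {ε : ℝ} :
    pDistC P P' ≤ ε ↔ 0 ≤ ε ∧ 1 - ε ^ 2 ≤ gFidC P P' ^ 2 := by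
  rw [pDistC, sqrt_le_iff, sub_le_comm]

lemma sum_sqrt_mul_le_one (hP0 : ∀ x, 0 ≤ P x) (hQ0 : ∀ x, 0 ≤ Q x)
    (hP1 : ∑ x, P x ≤ 1) (hQ1 : ∑ x, Q x ≤ 1) : ∑ x, √(P x * Q x) ≤ 1 :=
  calc ∑ x, √(P x * Q x) = ∑ x, √(P x) * √(Q x) :=
        sum_congr rfl fun x _ => sqrt_mul (hP0 x) _
    _ ≤ √(∑ x, P x) * √(∑ x, Q x) := sum_sqrt_mul_sqrt_le _ hP0 hQ0
    _ ≤ 1 := mul_le_one₀ (sqrt_le_one.mpr hP1) (sqrt_nonneg _) (sqrt_le_one.mpr hQ1)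

lemma logb_sq_gFidC_le_DmaxC (hP0 : ∀ x, 0 ≤ P x) (hP1 : ∑ x, P x = 1)
    (hQ0 : ∀ x, 0 ≤ Q x) (hQ1 : ∑ x, Q x ≤ 1) (hsupp : ∀ x, 0 < P x → 0 < Q x)
    (hP'0 : ∀ x, 0 ≤ P' x) (hF : 0 < gFidC P P') :
    logb 2 (gFidC P P' ^ 2) ≤ DmaxC P' Q := by
  set R : ℝ := 2 ^ DmaxC P' Q
  have hR : 0 < R := by positivity
  have hterm : ∀ x, √(P x * P' x) ≤ √R * √(P x * Q x) := by
    intro x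
    rw [← sqrt_mul hR.le, mul_left_comm]
    rcases (hP0 x).eq_or_lt with hPx | hPx
    · simp [← hPx]
    rcases (hP'0 x).eq_or_lt with hP'x | hP'x
    · simp [← hP'x]
    exact sqrt_le_sqrt (mul_le_mul_of_nonneg_left (le_rpow_DmaxC_mul hP'x (hsupp x hPx)) hPx.le)
  have hFR : gFidC P P' ≤ √R :=
    calc gFidC P P' = ∑ x, √(P x * P' x) := gFidC_eq_sum_sqrt hP1 P'
      _ ≤ ∑ x, √R * √(P x * Q x) := sum_le_sum fun x _ => hterm x
      _ = √R * ∑ x, √(P x * Q x) := (mul_sum _ _ _).symm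
      _ ≤ √R := mul_le_of_le_one_right (sqrt_nonneg _) (sum_sqrt_mul_le_one hP0 hQ0 hP1.le hQ1)
  calc logb 2 (gFidC P P' ^ 2) ≤ logb 2 R := by
        refine logb_le_logb_of_le one_lt_two (by positivity) ?_
        calc gFidC P P' ^ 2 ≤ √R ^ 2 := pow_le_pow_left₀ hF.le hFR 2
          _ = R := sq_sqrt hR.le
    _ = DmaxC P' Q := logb_rpow two_pos one_lt_two.ne'

lemma DmaxSmoothC_le_DmaxC {ε : ℝ} (hP0 : ∀ x, 0 ≤ P x) (hP1 : ∑ x, P x = 1)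
    (hQ0 : ∀ x, 0 ≤ Q x) (hQ1 : ∑ x, Q x ≤ 1) (hsupp : ∀ x, 0 < P x → 0 < Q x)
    (hε1 : ε < 1) (hP'0 : ∀ x, 0 ≤ P' x) (hP'1 : ∑ x, P' x ≤ 1)
    (hd : pDistC P P' ≤ ε) : DmaxSmoothC ε P Q ≤ DmaxC P' Q := by
  refine csInf_le ⟨logb 2 (1 - ε ^ 2), ?_⟩ ⟨P', hP'0, hP'1, hd, rfl⟩
  rintro _ ⟨P'', hP''0, -, hd'', rfl⟩
  obtain ⟨hε, hF⟩ := pDistC_le_iff.mp hd''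
  have hε2 : 0 < 1 - ε ^ 2 := by nlinarith
  have hF0 : 0 ≤ gFidC P P'' :=
    gFidC_eq_sum_sqrt hP1 P'' ▸ sum_nonneg fun x _ => sqrt_nonneg _
  have hFpos : 0 < gFidC P P'' := hF0.lt_of_ne fun h => by nlinarith [h]
  exact (logb_le_logb_of_le one_lt_two hε2 hF).trans
    (logb_sq_gFidC_le_DmaxC hP0 hP1 hQ0 hQ1 hsupp hP''0 hFpos)

lemma gFidC_ratioCutoff (hP0 : ∀ x, 0 ≤ P x) (hP1 : ∑ x, P x = 1) :
    gFidC P (ratioCutoff P Q t) = ∑ x, ratioCutoff P Q t x := by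
  rw [gFidC_eq_sum_sqrt hP1]
  refine sum_congr rfl fun x _ => ?_
  unfold ratioCutoff
  split_ifs
  exacts [sqrt_mul_self (hP0 x), by simp]

lemma DmaxC_ratioCutoff_le (hsupp : ∀ x, 0 < P x → 0 < Q x)
    (hex : ∃ x, 0 < ratioCutoff P Q t x) : DmaxC (ratioCutoff P Q t) Q ≤ logb 2 t := by
  refine DmaxC_le_logb hex fun x hx => ?_
  unfold ratioCutoff at hx ⊢
  split_ifs at hx ⊢ with h
  · exact ⟨hsupp x hx, h⟩
  · exact absurd hx (lt_irrefl 0)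

lemma one_sub_sum_ratioCutoff_le {α : ℝ} (hP0 : ∀ x, 0 ≤ P x) (hP1 : ∑ x, P x = 1)
    (hsupp : ∀ x, 0 < P x → 0 < Q x) (hα : 1 ≤ α) (ht : 0 < t) :
    1 - ∑ x, ratioCutoff P Q t x ≤
      t ^ (1 - α) * ∑ x ∈ univ.filter (fun x => 0 < P x), P x ^ α * Q x ^ (1 - α) := by
  have hloss : 1 - ∑ x, ratioCutoff P Q t x = ∑ x, (P x - ratioCutoff P Q t x) := by
    rw [sum_sub_distrib, hP1]
  rw [hloss, mul_sum, ← sum_filter_of_ne (p := fun x => 0 < P x)]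
  · refine sum_le_sum fun x hx => ?_
    have hPx : 0 < P x := (mem_filter.mp hx).2
    have hQx : 0 < Q x := hsupp x hPx
    unfold ratioCutoff
    split_ifs with h
    · rw [sub_self]
      positivity
    · rw [sub_zero]
      exact le_rpow_mul_rpow_of_mul_le hα ht hQx (not_le.mp h).le
  · intro x _ hx
    refine (hP0 x).lt_of_ne fun hPx => hx ?_
    simp [ratioCutoff, ← hPx]

lemma DmaxSmoothC_le_logb_of_tail_le {ε α : ℝ} (hP0 : ∀ x, 0 ≤ P x) (hP1 : ∑ x, P x = 1)
    (hQ0 : ∀ x, 0 ≤ Q x) (hQ1 : ∑ x, Q x ≤ 1) (hsupp : ∀ x, 0 < P x → 0 < Q x)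
    (hε : 0 < ε) (hε1 : ε < 1) (hα : 1 ≤ α) (ht : 0 < t)
    (htail : t ^ (1 - α) * ∑ x ∈ univ.filter (fun x => 0 < P x), P x ^ α * Q x ^ (1 - α) ≤
      1 - √(1 - ε ^ 2)) :
    DmaxSmoothC ε P Q ≤ logb 2 t := by
  have hε2 : 0 < 1 - ε ^ 2 := by nlinarith
  have hmass : √(1 - ε ^ 2) ≤ ∑ x, ratioCutoff P Q t x := by
    linarith [one_sub_sum_ratioCutoff_le (Q := Q) hP0 hP1 hsupp hα ht]
  have hd : pDistC P (ratioCutoff P Q t) ≤ ε := by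
    refine pDistC_le_iff.mpr ⟨hε.le, ?_⟩
    rw [gFidC_ratioCutoff hP0 hP1, ← sq_sqrt hε2.le]
    exact pow_le_pow_left₀ (sqrt_nonneg _) hmass 2
  have hex : ∃ x, 0 < ratioCutoff P Q t x :=
    exists_pos_of_sum_pos ((sqrt_pos.mpr hε2).trans_le hmass)
  calc DmaxSmoothC ε P Q ≤ DmaxC (ratioCutoff P Q t) Q :=
        DmaxSmoothC_le_DmaxC hP0 hP1 hQ0 hQ1 hsupp hε1 (ratioCutoff_nonneg hP0)
          (hP1 ▸ sum_le_sum fun x _ => ratioCutoff_le hP0 x) hd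
    _ ≤ logb 2 t := DmaxC_ratioCutoff_le hsupp hex

end

theorem DmaxSmoothC_le_renyi_general {X : Type*} [Fintype X] (P Q : X → ℝ)
    (hP0 : ∀ x, 0 ≤ P x) (hQ0 : ∀ x, 0 ≤ Q x)
    (hP1 : ∑ x, P x = 1) (hQ1 : ∑ x, Q x = 1)
    (hsupp : ∀ x, 0 < P x → 0 < Q x)
    (ε α : ℝ) (hε : 0 < ε) (hε1 : ε < 1) (hα : 1 < α) :
    DmaxSmoothC ε P Q ≤
      (1 / (α - 1)) * Real.logb 2
          (∑ x ∈ Finset.univ.filter (fun x => 0 < P x), P x ^ α * Q x ^ (1 - α))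
        + (1 / (α - 1)) * Real.logb 2 (1 / (1 - Real.sqrt (1 - ε ^ 2))) := by
  set S := ∑ x ∈ univ.filter (fun x => 0 < P x), P x ^ α * Q x ^ (1 - α)
  set δ := 1 - √(1 - ε ^ 2)
  have hδ : 0 < δ := sub_pos.mpr <| (sqrt_lt' one_pos).mpr (by nlinarith)
  have hS : 0 < S := by
    obtain ⟨x₀, hx₀⟩ := exists_pos_of_sum_pos (hP1 ▸ one_pos)
    refine sum_pos (fun x hx => ?_) ⟨x₀, mem_filter.mpr ⟨mem_univ x₀, hx₀⟩⟩
    have hPx : 0 < P x := (mem_filter.mp hx).2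
    have hQx : 0 < Q x := hsupp x hPx
    positivity
  have hexp : (α - 1)⁻¹ * (1 - α) = -1 := by
    rw [← neg_sub α 1, mul_neg, inv_mul_cancel₀ (sub_pos.mpr hα).ne']
  have htail : ((S / δ) ^ (α - 1)⁻¹) ^ (1 - α) * S = δ := by
    rw [← rpow_mul (by positivity), hexp, rpow_neg_one, inv_div, div_mul_cancel₀ _ hS.ne']
  calc DmaxSmoothC ε P Q ≤ logb 2 ((S / δ) ^ (α - 1)⁻¹) :=
        DmaxSmoothC_le_logb_of_tail_le hP0 hP1 hQ0 hQ1.le hsupp hε hε1 hα.le (by positivity)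
          htail.le
    _ = _ := by
      rw [logb_rpow_eq_mul_logb_of_pos (by positivity), div_eq_mul_one_div S,
        logb_mul hS.ne' (by positivity), inv_eq_one_div]
      ring

/-- `D_max^ε(P‖Q) ≤ D_α(P‖Q) + (1/(α-1)) log (1/(1-√(1-ε²)))` for classical
distributions, `ε ∈ (0,1)` and `α ∈ (1,2]`. -/
theorem DmaxSmoothC_le_renyi {X : Type*} [Fintype X] (P Q : X → ℝ)
    (hP0 : ∀ x, 0 ≤ P x) (hQ0 : ∀ x, 0 ≤ Q x)
    (hP1 : ∑ x, P x = 1) (hQ1 : ∑ x, Q x = 1)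
    (hsupp : ∀ x, 0 < P x → 0 < Q x)
    (ε α : ℝ) (hε : 0 < ε) (hε1 : ε < 1) (hα : 1 < α) (hα2 : α ≤ 2) :
    DmaxSmoothC ε P Q ≤
      (1 / (α - 1)) * Real.logb 2
          (∑ x ∈ Finset.univ.filter (fun x => 0 < P x), P x ^ α * Q x ^ (1 - α))
        + (1 / (α - 1)) * Real.logb 2 (1 / (1 - Real.sqrt (1 - ε ^ 2))) :=
  DmaxSmoothC_le_renyi_general P Q hP0 hQ0 hP1 hQ1 hsupp ε α hε hε1 hα
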